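/- arXiv:1010.1278 — 2 statements merged into one kernel-verified Lean document; each statement's English description precedes it below -/
import Mathlib

section
/- Let R be a commutative noetherian local ring with maximal ideal m. Let A and L be R-modules such that A is artinian and m^n·Γ_m(L) = 0 for some integer n ≥ 1, where Γ_m(L) = {x ∈ L : m^j x = 0 for some j}. Fix an index t ≥ 0 such that m^t A = m^{t+1} A, and let s be an integer with s ≥ min(n, t). Then len_R(Hom_R(A, L)) ≤ β^R_0(A) · len_R(0 :_L m^s), where β^R_0(A) = len_R(A ⊗_R k) = dim_k(A/mA), (0 :_L m^s) = {x ∈ L : m^s x = 0}, and we use the convention 0·∞ = 0. -/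
/-!
Common definitions: `Ext`/`Tor` as objects of `ModuleCat R`, mini-max modules,
injective hulls of the residue field, Matlis biduality, module length, and the
`m`-adic completion of a local ring.
-/

open CategoryTheory IsLocalRing TensorProduct

universe u

/-- `Ext^i_R(A, B)`, as an object of `ModuleCat R` (Mathlib's derived-functor `Ext`). -/
noncomputable def extMod (R : Type u) [CommRing R] (i : ℕ) (A B : Type u)
    [AddCommGroup A] [Module R A] [AddCommGroup B] [Module R B] : ModuleCat.{u} R :=
  ((Ext R (ModuleCat.{u} R) i).obj (Opposite.op (ModuleCat.of R A))).obj (ModuleCat.of R B)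

/-- `Tor_i^R(A, B)`, as an object of `ModuleCat R`. -/
noncomputable def torMod (R : Type u) [CommRing R] (i : ℕ) (A B : Type u)
    [AddCommGroup A] [Module R A] [AddCommGroup B] [Module R B] : ModuleCat.{u} R :=
  ((Tor (ModuleCat.{u} R) i).obj (ModuleCat.of R A)).obj (ModuleCat.of R B)

/-- An `R`-module `M` is mini-max if it has a noetherian submodule `N` such that `M/N`
is artinian. -/
def IsMiniMax (R M : Type u) [CommRing R] [AddCommGroup M] [Module R M] : Prop :=
  ∃ N : Submodule R M, IsNoetherian R N ∧ IsArtinian R (M ⧸ N)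

/-- `E` is an injective hull of the residue field `k` of the local ring `R`:
`E` is injective and is an essential extension of `k`. -/
def IsInjectiveHullOfResidueField (R E : Type u) [CommRing R] [IsLocalRing R]
    [AddCommGroup E] [Module R E] : Prop :=
  Module.Injective R E ∧
    ∃ f : ResidueField R →ₗ[R] E, Function.Injective f ∧
      ∀ S : Submodule R E, S ≠ ⊥ → S ⊓ LinearMap.range f ≠ ⊥

/-- The Matlis biduality map `M → Hom_R(Hom_R(M, E), E)`, `x ↦ (ψ ↦ ψ x)`. -/
def matlisBidual (R M E : Type u) [CommRing R] [AddCommGroup M] [Module R M]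
    [AddCommGroup E] [Module R E] : M →ₗ[R] ((M →ₗ[R] E) →ₗ[R] E) :=
  LinearMap.applyₗ

/-- `M` is Matlis reflexive (with respect to `E`): the biduality map is an isomorphism. -/
def IsMatlisReflexive (R M E : Type u) [CommRing R] [AddCommGroup M] [Module R M]
    [AddCommGroup E] [Module R E] : Prop :=
  Function.Bijective (matlisBidual R M E)

/-- The length of an `R`-module `M`, valued in `ℕ∞`: the supremum of the lengths of
chains of submodules of `M`. -/
noncomputable def moduleLength (R M : Type u) [Semiring R] [AddCommMonoid M] [Module R M] :
    ℕ∞ :=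
  WithBot.unbotD 0 (Order.krullDim (Submodule R M))

/-- `inf { i ≥ 0 | Ext^i_R(K, L) ≠ 0 }`, computed in `ℕ∞` (so it is `⊤` when all the
`Ext` modules vanish).  Taking `K = R/m` gives `depth_R(L)`; taking `K = R/a` gives
`depth_R(a; L)`. -/
noncomputable def extInf (R : Type u) [CommRing R] (K L : Type u)
    [AddCommGroup K] [Module R K] [AddCommGroup L] [Module R L] : ℕ∞ :=
  sInf {n : ℕ∞ | ∃ i : ℕ, n = i ∧ Nontrivial (extMod R i K L)}

/-- The `m`-adic completion `R̂` of the local ring `R`. -/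
abbrev Rhat (R : Type u) [CommRing R] [IsLocalRing R] : Type u :=
  AdicCompletion (maximalIdeal R) R

/-!
Every element of an artinian module over a noetherian local ring is killed by a power of `m`
(Nakayama applied to the stabilising chain `m^j · Ra`). Hence every `f : A → L` lands in
`Γ_m(L)`, so `m^n f(A) = 0`; when `m^t A = m^(t+1) A` also `m^t f(A) = m^n m^t f(A) = 0`.
Either way `f(A) ⊆ (0 :_L m^s)`. Lifting a generating set of `A/mA` of cardinality at most
`β_0(A)` gives a set `g` with `A = Rg + m^s A`, so `f ↦ (f x)_{x ∈ g}` embeds `Hom_R(A, L)`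
into `(0 :_L m^s)^g`.
-/

open Submodule

theorem moduleLength_eq_length (R M : Type u) [Ring R] [AddCommGroup M] [Module R M] :
    moduleLength R M = Module.length R M := by
  rw [moduleLength, ← Module.coe_length, WithBot.unbotD_coe]

section Length

variable {R M : Type*} [Ring R] [AddCommGroup M] [Module R M]

theorem Module.exists_encard_le_span_eq_top_of_length_le (c : ℕ) (h : Module.length R M ≤ c) :
    ∃ s : Set M, s.encard ≤ c ∧ span R s = ⊤ := by
  induction c generalizing M with
  | zero =>
    have : Subsingleton M := Module.length_eq_zero_iff.mp (nonpos_iff_eq_zero.mp h)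
    exact ⟨∅, by simp, Subsingleton.elim _ _⟩
  | succ c ih =>
    by_cases hM : Subsingleton M
    · exact ⟨∅, by simp, Subsingleton.elim _ _⟩
    rw [not_subsingleton_iff_nontrivial] at hM
    obtain ⟨x, hx⟩ := exists_ne (0 : M)
    set S := span R {x}
    have : Nontrivial S := nontrivial_of_ne ⟨x, mem_span_singleton_self x⟩ 0 (by simpa using hx)
    have hlen : Module.length R M = Module.length R S + Module.length R (M ⧸ S) :=
      Module.length_eq_add_of_exact S.subtype S.mkQ S.injective_subtype S.mkQ_surjective
        (LinearMap.exact_subtype_mkQ S)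
    have hquot : Module.length R (M ⧸ S) ≤ c := by
      have hS : 1 ≤ Module.length R S := Order.one_le_iff_pos.mpr Module.length_pos
      refine (ENat.add_le_add_iff_right ENat.one_ne_top).mp ?_
      calc Module.length R (M ⧸ S) + 1 ≤ Module.length R S + Module.length R (M ⧸ S) := by
            rw [add_comm]; gcongr
        _ ≤ c + 1 := by rw [← hlen]; exact_mod_cast h
    obtain ⟨s, hs_card, hs_span⟩ := ih hquot
    refine ⟨insert x (Function.surjInv S.mkQ_surjective '' s), ?_, ?_⟩
    · calc _ ≤ (Function.surjInv S.mkQ_surjective '' s).encard + 1 := Set.encard_insert_le _ _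
        _ ≤ s.encard + 1 := by gcongr; exact Set.encard_image_le _ _
        _ ≤ (c + 1 : ℕ) := by push_cast; gcongr
    · rw [span_insert, ← Submodule.map_mkQ_eq_top, map_span, ← Set.image_comp,
        Function.comp_surjInv, Set.image_id, hs_span]

theorem Module.exists_encard_le_length_span_eq_top :
    ∃ s : Set M, s.encard ≤ Module.length R M ∧ span R s = ⊤ := by
  cases h : Module.length R M with
  | top => exact ⟨Set.univ, le_top, span_univ⟩
  | coe c => exact Module.exists_encard_le_span_eq_top_of_length_le c h.le

theorem Submodule.exists_encard_le_length_quotient_span_sup_eq_top (P : Submodule R M) :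
    ∃ s : Set M, s.encard ≤ Module.length R (M ⧸ P) ∧ span R s ⊔ P = ⊤ := by
  obtain ⟨s, hs_card, hs_span⟩ :=
    Module.exists_encard_le_length_span_eq_top (R := R) (M := M ⧸ P)
  refine ⟨Function.surjInv P.mkQ_surjective '' s, (Set.encard_image_le _ _).trans hs_card, ?_⟩
  rw [sup_comm, ← Submodule.map_mkQ_eq_top, map_span, ← Set.image_comp, Function.comp_surjInv,
    Set.image_id, hs_span]

end Length

section Torsion

variable {R M N : Type*} [CommRing R] [AddCommGroup M] [Module R M] [AddCommGroup N] [Module R N]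

theorem Submodule.le_torsionBySet_iff_smul_eq_bot {P : Submodule R M} {I : Ideal R} :
    P ≤ torsionBySet R M I ↔ I • P = ⊥ :=
  (torsion_gc R M P (OrderDual.toDual I)).symm.trans le_annihilator_iff

theorem Submodule.sup_pow_smul_top_eq_top {P : Submodule R M} {I : Ideal R}
    (h : P ⊔ I • ⊤ = ⊤) (k : ℕ) : P ⊔ I ^ k • ⊤ = ⊤ := by
  induction k with
  | zero => simp
  | succ k ih =>
    have hk : I ^ k • ⊤ ≤ P ⊔ I ^ (k + 1) • ⊤ :=
      calc I ^ k • ⊤ = I ^ k • (P ⊔ I • ⊤) := by rw [h]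
        _ = I ^ k • P ⊔ I ^ (k + 1) • ⊤ := by rw [smul_sup, pow_succ, mul_smul]
        _ ≤ P ⊔ I ^ (k + 1) • ⊤ := sup_le_sup_right smul_le_right _
    rw [eq_top_iff]
    calc ⊤ = P ⊔ I ^ k • ⊤ := ih.symm
      _ ≤ P ⊔ I ^ (k + 1) • ⊤ := sup_le le_sup_left hk

theorem Submodule.pow_smul_top_eq_of_le {I : Ideal R} {t k : ℕ}
    (ht : I ^ t • (⊤ : Submodule R M) = I ^ (t + 1) • ⊤) (hk : t ≤ k) :
    I ^ k • (⊤ : Submodule R M) = I ^ t • ⊤ := by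
  induction k, hk using Nat.le_induction with
  | base => rfl
  | succ k hk ih => rw [pow_succ', mul_smul, ih, ← mul_smul, ← pow_succ', ← ht]

theorem IsArtinian.iSup_torsionBySet_pow_eq_top [IsNoetherianRing R] [IsArtinian R M]
    {I : Ideal R} (hI : I ≤ (⊥ : Ideal R).jacobson) :
    ⨆ j : ℕ, torsionBySet R M (I ^ j : Ideal R) = ⊤ := by
  refine eq_top_iff.mpr fun a _ => ?_
  obtain ⟨j, hj⟩ := IsArtinian.monotone_stabilizes (R := R) (M := M)
    ⟨fun j => OrderDual.toDual (I ^ j • span R {a}),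
      fun _ _ h => smul_mono_left (Ideal.pow_le_pow_right h)⟩
  have hfg : (I ^ j • span R {a}).FG :=
    isNoetherian_submodule.mp (isNoetherian_of_fg_of_noetherian _ (fg_span_singleton a)) _
      smul_le_right
  have hstable : I ^ j • span R {a} ≤ I • (I ^ j • span R {a}) := by
    rw [← mul_smul, ← pow_succ']
    exact (show I ^ j • span R {a} = I ^ (j + 1) • span R {a} from hj (j + 1) j.le_succ).le
  have hzero := eq_bot_of_le_smul_of_le_jacobson_bot I _ hfg hstable hI
  exact mem_iSup_of_mem j (le_torsionBySet_iff_smul_eq_bot.mpr hzero (mem_span_singleton_self a))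

theorem LinearMap.range_le_iSup_torsionBySet_pow {I : Ideal R} (f : M →ₗ[R] N)
    (hM : ⨆ j : ℕ, torsionBySet R M (I ^ j : Ideal R) = ⊤) :
    LinearMap.range f ≤ ⨆ j : ℕ, torsionBySet R N (I ^ j : Ideal R) := by
  rw [LinearMap.range_eq_map, ← hM, Submodule.map_iSup]
  refine iSup_mono fun j => ?_
  rintro _ ⟨x, hx, rfl⟩
  rw [SetLike.mem_coe, mem_torsionBySet_iff] at hx
  rw [mem_torsionBySet_iff]
  intro c
  rw [← map_smul, hx c, map_zero]

theorem LinearMap.pow_smul_range_eq_bot_of_pow_smul_top_eq {I : Ideal R} {n t : ℕ}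
    (f : M →ₗ[R] N) (hf : I ^ n • LinearMap.range f = ⊥)
    (ht : I ^ t • (⊤ : Submodule R M) = I ^ (t + 1) • ⊤) :
    I ^ t • LinearMap.range f = ⊥ := by
  have hstable : I ^ t • (⊤ : Submodule R M) = I ^ n • I ^ t • ⊤ := by
    rw [← mul_smul, ← pow_add, add_comm, pow_smul_top_eq_of_le ht (Nat.le_add_right t n)]
  refine eq_bot_iff.mpr ?_
  calc I ^ t • LinearMap.range f = Submodule.map f (I ^ t • ⊤) := by
        rw [map_smul'', LinearMap.range_eq_map]
    _ = I ^ n • Submodule.map f (I ^ t • ⊤) := by rw [← map_smul'', ← hstable]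
    _ ≤ I ^ n • LinearMap.range f := smul_mono_right _ LinearMap.map_le_range
    _ = ⊥ := hf

theorem length_linearMap_le_encard_mul {I : Ideal R} {s : Set M}
    (hs : span R s ⊔ I • ⊤ = ⊤) (k : ℕ)
    (hrange : ∀ f : M →ₗ[R] N, LinearMap.range f ≤ torsionBySet R N (I ^ k : Ideal R)) :
    Module.length R (M →ₗ[R] N) ≤
      s.encard * Module.length R (torsionBySet R N (I ^ k : Ideal R)) := by
  let eval : (M →ₗ[R] N) →ₗ[R] (s → torsionBySet R N (I ^ k : Ideal R)) :=
    LinearMap.pi fun x => (LinearMap.applyₗ (x : M)).codRestrict _ fun f => hrange f ⟨x, rfl⟩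
  have heval : Function.Injective eval := by
    refine (injective_iff_map_eq_zero eval).mpr fun f hf => ?_
    have hs_ker : span R s ≤ LinearMap.ker f :=
      span_le.mpr fun x hx => congrArg Subtype.val (congrFun hf ⟨x, hx⟩)
    have hpow_ker : I ^ k • ⊤ ≤ LinearMap.ker f := by
      rw [LinearMap.le_ker_iff_map, map_smul'', ← LinearMap.range_eq_map]
      exact le_torsionBySet_iff_smul_eq_bot.mp (hrange f)
    rw [← LinearMap.ker_eq_top, eq_top_iff, ← sup_pow_smul_top_eq_top hs k]
    exact sup_le hs_ker hpow_ker
  calc Module.length R (M →ₗ[R] N)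
      ≤ Module.length R (s → torsionBySet R N (I ^ k : Ideal R)) :=
        Module.length_le_of_injective eval heval
    _ = _ := Module.length_pi

end Torsion

theorem length_hom_le_betti_mul_length_torsion_general
    (R : Type u) [CommRing R] [IsNoetherianRing R] [IsLocalRing R]
    (A L : Type u) [AddCommGroup A] [Module R A] [AddCommGroup L] [Module R L]
    [IsArtinian R A]
    (n : ℕ)
    (hΓ : (maximalIdeal R ^ n) •
      (⨆ j : ℕ, Submodule.torsionBySet R L ((maximalIdeal R ^ j : Ideal R) : Set R)) =
        (⊥ : Submodule R L))
    (t : ℕ) (ht : maximalIdeal R ^ t • (⊤ : Submodule R A) =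
      maximalIdeal R ^ (t + 1) • (⊤ : Submodule R A))
    (s : ℕ) (hs : min n t ≤ s) :
    moduleLength R (A →ₗ[R] L) ≤
      moduleLength R (A ⊗[R] ResidueField R) *
        moduleLength R (Submodule.torsionBySet R L ((maximalIdeal R ^ s : Ideal R) : Set R)) := by
  set m := maximalIdeal R
  have hA : ⨆ j : ℕ, torsionBySet R A (m ^ j : Ideal R) = ⊤ :=
    IsArtinian.iSup_torsionBySet_pow_eq_top (jacobson_eq_maximalIdeal ⊥ bot_ne_top).ge
  have hrange (f : A →ₗ[R] L) : LinearMap.range f ≤ torsionBySet R L (m ^ s : Ideal R) := by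
    have hmn : m ^ n • LinearMap.range f = ⊥ :=
      le_bot_iff.mp (hΓ ▸ smul_mono_right _ (f.range_le_iSup_torsionBySet_pow hA))
    have hmin : m ^ min n t • LinearMap.range f = ⊥ := by
      rcases min_choice n t with h | h <;> rw [h]
      · exact hmn
      · exact f.pow_smul_range_eq_bot_of_pow_smul_top_eq hmn ht
    exact le_torsionBySet_iff_smul_eq_bot.mpr
      (le_bot_iff.mp (hmin ▸ smul_mono_left (Ideal.pow_le_pow_right hs)))
  obtain ⟨g, hg_card, hg_span⟩ :=
    (m • ⊤ : Submodule R A).exists_encard_le_length_quotient_span_sup_eq_top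
  simp only [moduleLength_eq_length]
  calc Module.length R (A →ₗ[R] L)
      ≤ g.encard * Module.length R (torsionBySet R L (m ^ s : Ideal R)) :=
        length_linearMap_le_encard_mul hg_span s hrange
    _ ≤ _ := by
        have hβ : Module.length R (A ⊗[R] ResidueField R) = Module.length R (A ⧸ m • ⊤) :=
          (tensorQuotEquivQuotSMul A m).length_eq
        rw [hβ]
        gcongr

/-- Let `R` be a commutative noetherian local ring with maximal ideal `m`, let `A` be an
artinian `R`-module and `L` an `R`-module with `m^n · Γ_m(L) = 0` for some `n ≥ 1`,
where `Γ_m(L) = { x ∈ L | m^j x = 0 for some j }`.  Fix `t` with `m^t A = m^(t+1) A` and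
`s ≥ min n t`.  Then `len_R(Hom_R(A, L)) ≤ β^R_0(A) · len_R(0 :_L m^s)`, where
`β^R_0(A) = len_R(A ⊗_R k)` (with the convention `0 · ∞ = 0`, valid in `ℕ∞`). -/
theorem length_hom_le_betti_mul_length_torsion
    (R : Type u) [CommRing R] [IsNoetherianRing R] [IsLocalRing R]
    (A L : Type u) [AddCommGroup A] [Module R A] [AddCommGroup L] [Module R L]
    [IsArtinian R A]
    (n : ℕ) (hn : 1 ≤ n)
    (hΓ : (maximalIdeal R ^ n) •
      (⨆ j : ℕ, Submodule.torsionBySet R L ((maximalIdeal R ^ j : Ideal R) : Set R)) =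
        (⊥ : Submodule R L))
    (t : ℕ) (ht : maximalIdeal R ^ t • (⊤ : Submodule R A) =
      maximalIdeal R ^ (t + 1) • (⊤ : Submodule R A))
    (s : ℕ) (hs : min n t ≤ s) :
    moduleLength R (A →ₗ[R] L) ≤
      moduleLength R (A ⊗[R] ResidueField R) *
        moduleLength R (Submodule.torsionBySet R L ((maximalIdeal R ^ s : Ideal R) : Set R)) :=
  length_hom_le_betti_mul_length_torsion_general R A L n hΓ t ht s hs
end

section
/- Let R be a commutative noetherian local ring with maximal ideal m. Let A be an artinian R-module and let L be an m-torsion R-module. Then A ⊗_R L = 0 if and only if A = mA or L = mL. -/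
/-!
Common definitions: `Ext`/`Tor` as objects of `ModuleCat R`, mini-max modules,
injective hulls of the residue field, Matlis biduality, module length, and the
`m`-adic completion of a local ring.
-/

open CategoryTheory IsLocalRing TensorProduct

universe u

/-!
If `A = mA` then `A = mʲA` for every `j`, so `a ⊗ x ∈ mʲA ⊗ x = A ⊗ mʲx = 0` as soon as
`mʲx = 0`. The case `L = mL` is symmetric, because an artinian module over a noetherian local
ring is `m`-torsion: the chain `mⁿ • Ra` stabilises, and Nakayama kills its stable value.
Conversely, if `A/mA` and `L/mL` are both nonzero, they are nonzero `R/m`-vector spaces, so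
there are `R`-linear maps `f : A → R/m`, `g : L → R/m` with `f a ≠ 0 ≠ g x`; composing
`f ⊗ g` with multiplication `R/m ⊗ R/m → R/m` sends `a ⊗ x` to `f a * g x ≠ 0`.
-/

lemma Submodule.pow_smul_top_eq_top {R M : Type*} [CommSemiring R] [AddCommMonoid M]
    [Module R M] {I : Ideal R} (h : I • (⊤ : Submodule R M) = ⊤) (n : ℕ) :
    I ^ n • (⊤ : Submodule R M) = ⊤ := by
  induction n with
  | zero => simp
  | succ n ih => rw [pow_succ', Submodule.mul_smul, ih, h]

lemma TensorProduct.subsingleton_of_smul_top_eq_top {R M N : Type*} [CommRing R]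
    [AddCommGroup M] [Module R M] [AddCommGroup N] [Module R N] {I : Ideal R}
    (hM : I • (⊤ : Submodule R M) = ⊤) (hN : ∀ y : N, ∃ n : ℕ, ∀ r ∈ I ^ n, r • y = 0) :
    Subsingleton (M ⊗[R] N) := by
  suffices ∀ x y, x ⊗ₜ[R] y = (0 : M ⊗[R] N) from
    subsingleton_of_forall_eq 0 fun z => z.induction_on rfl this fun _ _ hu hv => by
      rw [hu, hv, add_zero]
  intro x y
  obtain ⟨n, hn⟩ := hN y
  have hx : x ∈ I ^ n • (⊤ : Submodule R M) := by simp [Submodule.pow_smul_top_eq_top hM]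
  refine Submodule.smul_induction_on hx (fun r hr m _ => ?_) fun u v hu hv => ?_
  · rw [smul_tmul, hn r hr, tmul_zero]
  · rw [add_tmul, hu, hv, add_zero]

lemma IsArtinian.exists_pow_smul_eq_zero_of_le_jacobson {R A : Type*} [CommRing R]
    [IsNoetherianRing R] [AddCommGroup A] [Module R A] [IsArtinian R A] {I : Ideal R}
    (hI : I ≤ Ideal.jacobson ⊥) (a : A) : ∃ n : ℕ, ∀ r ∈ I ^ n, r • a = 0 := by
  let N := Submodule.span R {a}
  obtain ⟨n, hn⟩ := IsArtinian.monotone_stabilizes (R := R) (M := A)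
    ⟨fun n => OrderDual.toDual (I ^ n • N), fun m n hmn =>
      Submodule.smul_mono_left (Ideal.pow_le_pow_right hmn)⟩
  have hstable : I ^ n • N ≤ I • (I ^ n • N) := by
    rw [← Submodule.mul_smul, ← pow_succ']
    exact le_of_eq (hn (n + 1) n.le_succ)
  have hfg : (I ^ n • N).FG :=
    Submodule.FG.smul (IsNoetherian.noetherian _) (Submodule.fg_span_singleton a)
  have hzero : I ^ n • N = ⊥ :=
    Submodule.eq_bot_of_le_smul_of_le_jacobson_bot I _ hfg hstable hI
  refine ⟨n, fun r hr => ?_⟩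
  simpa [N, hzero] using Submodule.smul_mem_smul hr (Submodule.mem_span_singleton_self a)

lemma Ideal.exists_linearMap_quotient_ne_zero {R M : Type*} [CommRing R] [AddCommGroup M]
    [Module R M] (I : Ideal R) [I.IsMaximal] (h : I • (⊤ : Submodule R M) ≠ ⊤) :
    ∃ (f : M →ₗ[R] R ⧸ I) (x : M), f x ≠ 0 := by
  let _ : Field (R ⧸ I) := Ideal.Quotient.field I
  obtain ⟨x, -, hx⟩ := SetLike.exists_of_lt (lt_top_iff_ne_top.2 h)
  obtain ⟨φ, hφ⟩ := Module.Projective.exists_dual_ne_zero (R ⧸ I)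
    (x := (I • ⊤ : Submodule R M).mkQ x)
    (by rwa [Ne, Submodule.mkQ_apply, Submodule.Quotient.mk_eq_zero])
  exact ⟨φ.restrictScalars R ∘ₗ (I • ⊤ : Submodule R M).mkQ, x, hφ⟩

lemma TensorProduct.tmul_ne_zero_of_apply_ne_zero {R M N K : Type*} [CommSemiring R]
    [AddCommMonoid M] [Module R M] [AddCommMonoid N] [Module R N]
    [CommSemiring K] [NoZeroDivisors K] [Algebra R K]
    (f : M →ₗ[R] K) (g : N →ₗ[R] K) {x : M} {y : N} (hx : f x ≠ 0) (hy : g y ≠ 0) :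
    x ⊗ₜ[R] y ≠ 0 := by
  intro h
  apply mul_ne_zero hx hy
  simpa using congrArg (LinearMap.mul' R K ∘ₗ TensorProduct.map f g) h

/-- Let `R` be a commutative noetherian local ring with maximal ideal `m`, let `A` be an
artinian `R`-module and `L` an `m`-torsion `R`-module.  Then `A ⊗_R L = 0` if and only
if `A = mA` or `L = mL`. -/
theorem tensor_eq_zero_iff
    (R : Type u) [CommRing R] [IsNoetherianRing R] [IsLocalRing R]
    (A L : Type u) [AddCommGroup A] [Module R A] [AddCommGroup L] [Module R L]
    [IsArtinian R A]
    (hL : ∀ x : L, ∃ j : ℕ, ∀ a ∈ maximalIdeal R ^ j, a • x = 0) :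
    Subsingleton (A ⊗[R] L) ↔
      maximalIdeal R • (⊤ : Submodule R A) = ⊤ ∨
        maximalIdeal R • (⊤ : Submodule R L) = ⊤ := by
  constructor
  · intro hAL
    by_contra! hne
    obtain ⟨f, a, hfa⟩ := (maximalIdeal R).exists_linearMap_quotient_ne_zero hne.1
    obtain ⟨g, x, hgx⟩ := (maximalIdeal R).exists_linearMap_quotient_ne_zero hne.2
    exact tmul_ne_zero_of_apply_ne_zero f g hfa hgx (Subsingleton.elim _ _)
  · rintro (hA | hL')
    · exact subsingleton_of_smul_top_eq_top hA hL
    · have hA : ∀ a : A, ∃ n : ℕ, ∀ r ∈ maximalIdeal R ^ n, r • a = 0 :=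
        IsArtinian.exists_pow_smul_eq_zero_of_le_jacobson
          (jacobson_eq_maximalIdeal ⊥ bot_ne_top).ge
      have := subsingleton_of_smul_top_eq_top hL' hA
      exact (TensorProduct.comm R A L).toEquiv.subsingleton
end
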